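/- arXiv:2408.04753 — 4 statements merged into one kernel-verified Lean document; each statement's English description precedes it below -/
import Mathlib

section
/- Let n ≥ 4, let L ⊆ [n], and let a < b < c < d be elements of [n] \ L. Then h(Lac, Lbd) = |L| + 2 and h(Lbd, Lac) = |L| + 1. Consequently h(Lac, Lbd) + h(Lbd, Lac) − |Lac ∩ Lbd| − min(|Lac|, |Lbd|) = 1. -/
/-- `S(I,d)`: the set of the `d` smallest elements of `I`. -/
def smallSet (I : Finset ℕ) (d : ℕ) : Finset ℕ := ((Finset.sort I (· ≤ ·)).take d).toFinset

/-- `E(I,d)`: the set of the `d` largest elements of `I`. -/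
def largeSet (I : Finset ℕ) (d : ℕ) : Finset ℕ :=
  ((Finset.sort I (· ≤ ·)).drop (I.card - d)).toFinset

/-- `A ⪯ B`: the sets have the same cardinality `d` and for each `1 ≤ s ≤ d`
the `s`-th smallest element of `A` is at most the `s`-th smallest element of `B`. -/
def PrecLE (A B : Finset ℕ) : Prop :=
  A.card = B.card ∧
  ∀ s < A.card, (Finset.sort A (· ≤ ·)).getD s 0 ≤ (Finset.sort B (· ≤ ·)).getD s 0

/-- `h(I,J) = max{ d : 0 ≤ d ≤ min(|I|,|J|) and S(I,d) ⪯ E(J,d) }`.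
In the paper this equals `dim Hom_D(M_I, M_J)` for rank one modules over the
Auslander algebra `D` of `ℂ[t]/(tⁿ)`. -/
noncomputable def homDim (I J : Finset ℕ) : ℕ :=
  sSup {d | d ≤ min I.card J.card ∧ PrecLE (smallSet I d) (largeSet J d)}

lemma getD_sort_lt_iff (F : Finset ℕ) (s m : ℕ) (hs : s < F.card) :
    (Finset.sort F (· ≤ ·)).getD s 0 < m ↔ s < (F.filter (· < m)).card := by
  set l := Finset.sort F (· ≤ ·) with hl
  have hlen : l.length = F.card := Finset.length_sort _
  have hslt : l.Pairwise (· < ·) := (Finset.sortedLT_sort F).pairwise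
  have hsle : l.Pairwise (· ≤ ·) := Finset.pairwise_sort F (· ≤ ·)
  have hsl : s < l.length := by omega
  constructor
  · intro h
    have hsub : (Finset.range (s+1)).image (fun i => l.getD i 0) ⊆ F.filter (· < m) := by
      intro x hx
      simp only [Finset.mem_image, Finset.mem_range] at hx
      obtain ⟨i, hi, rfl⟩ := hx
      have hil : i < l.length := by omega
      rw [List.getD_eq_getElem _ _ hil]
      refine Finset.mem_filter.2 ⟨?_, ?_⟩
      · rw [← Finset.mem_sort (· ≤ ·)]
        exact List.getElem_mem _
      · have : l.get ⟨i, hil⟩ ≤ l.get ⟨s, hsl⟩ :=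
          hsle.rel_get_of_le (by exact_mod_cast Nat.lt_succ_iff.1 hi)
        rw [List.getD_eq_getElem _ _ hsl] at h
        simp only [List.get_eq_getElem] at this
        omega
    have hinj : Set.InjOn (fun i => l.getD i 0) (Finset.range (s+1)) := by
      intro i hi j hj hij
      simp only [Finset.coe_range, Set.mem_Iio] at hi hj
      have hil : i < l.length := by omega
      have hjl : j < l.length := by omega
      simp only [List.getD_eq_getElem _ _ hil, List.getD_eq_getElem _ _ hjl] at hij
      by_contra hne
      rcases Nat.lt_or_ge i j with h' | h'
      · have := hslt.rel_get_of_lt (a := ⟨i, hil⟩) (b := ⟨j, hjl⟩) h'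
        simp only [List.get_eq_getElem] at this
        omega
      · have h'' : j < i := by omega
        have := hslt.rel_get_of_lt (a := ⟨j, hjl⟩) (b := ⟨i, hil⟩) h''
        simp only [List.get_eq_getElem] at this
        omega
    calc s < s + 1 := Nat.lt_succ_self s
    _ = ((Finset.range (s+1)).image (fun i => l.getD i 0)).card := by
        rw [Finset.card_image_of_injOn hinj, Finset.card_range]
    _ ≤ (F.filter (· < m)).card := Finset.card_le_card hsub
  · intro h
    by_contra hm
    push_neg at hm
    have hsub : F.filter (· < m) ⊆ (Finset.range s).image (fun i => l.getD i 0) := by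
      intro x hx
      obtain ⟨hxF, hxm⟩ := Finset.mem_filter.1 hx
      have : x ∈ l := (Finset.mem_sort (· ≤ ·)).2 hxF
      obtain ⟨i, hi⟩ := List.mem_iff_get.1 this
      refine Finset.mem_image.2 ⟨i, Finset.mem_range.2 ?_, ?_⟩
      · by_contra hsi
        push_neg at hsi
        have : l.get ⟨s, hsl⟩ ≤ l.get i :=
          hsle.rel_get_of_le (by exact_mod_cast hsi)
        rw [List.getD_eq_getElem _ _ hsl] at hm
        simp only [List.get_eq_getElem] at this
        rw [← hi] at hxm
        simp only [List.get_eq_getElem] at hxm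
        omega
      · rw [List.getD_eq_getElem _ _ i.isLt, ← hi]
        simp
    have := (Finset.card_le_card hsub).trans
      ((Finset.card_image_le).trans (le_of_eq (Finset.card_range s)))
    omega

lemma sort_smallSet (I : Finset ℕ) (d : ℕ) :
    Finset.sort (smallSet I d) (· ≤ ·) = (Finset.sort I (· ≤ ·)).take d := by
  have hnd : ((Finset.sort I (· ≤ ·)).take d).Nodup :=
    (Finset.sort_nodup _ _).sublist (List.take_sublist _ _)
  exact (List.toFinset_sort _ hnd).2 ((Finset.pairwise_sort _ _).sublist (List.take_sublist _ _))

lemma sort_largeSet (I : Finset ℕ) (d : ℕ) :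
    Finset.sort (largeSet I d) (· ≤ ·) = (Finset.sort I (· ≤ ·)).drop (I.card - d) := by
  have hnd : ((Finset.sort I (· ≤ ·)).drop (I.card - d)).Nodup :=
    (Finset.sort_nodup _ _).sublist (List.drop_sublist _ _)
  exact (List.toFinset_sort _ hnd).2 ((Finset.pairwise_sort _ _).sublist (List.drop_sublist _ _))

lemma card_smallSet (I : Finset ℕ) (d : ℕ) (h : d ≤ I.card) : (smallSet I d).card = d := by
  rw [← Finset.length_sort (· ≤ ·), sort_smallSet, List.length_take, Finset.length_sort]
  omega

lemma card_largeSet (I : Finset ℕ) (d : ℕ) (h : d ≤ I.card) : (largeSet I d).card = d := by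
  rw [← Finset.length_sort (· ≤ ·), sort_largeSet, List.length_drop, Finset.length_sort]
  omega

lemma getD_take' (l : List ℕ) (d s : ℕ) (h : s < d) (h2 : s < l.length) :
    (l.take d).getD s 0 = l.getD s 0 := by
  rw [List.getD_eq_getElem _ _ (by simp [List.length_take]; omega),
    List.getD_eq_getElem _ _ h2, List.getElem_take]

lemma getD_drop' (l : List ℕ) (t s : ℕ) (h : t + s < l.length) :
    (l.drop t).getD s 0 = l.getD (t + s) 0 := by
  rw [List.getD_eq_getElem _ _ (by simp [List.length_drop]; omega),
    List.getD_eq_getElem _ _ h, List.getElem_drop]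

lemma card_filter_union_pair (L : Finset ℕ) (x y : ℕ) (hx : x ∉ L) (hy : y ∉ L) (hxy : x ≠ y)
    (p : ℕ → Prop) [DecidablePred p] :
    ((L ∪ {x, y}).filter p).card
      = (L.filter p).card + (if p x then 1 else 0) + (if p y then 1 else 0) := by
  have hpair : ((({x, y}) : Finset ℕ).filter p).card
      = (if p x then 1 else 0) + (if p y then 1 else 0) := by
    rw [Finset.filter_insert, Finset.filter_singleton]
    split_ifs <;> simp [Finset.card_insert_of_notMem, Finset.mem_singleton, hxy]
  have hdisj : Disjoint (L.filter p) ((({x, y}) : Finset ℕ).filter p) :=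
    Finset.disjoint_filter_filter (Finset.disjoint_left.2 fun z hzL hz2 => by
      rcases Finset.mem_insert.1 hz2 with rfl | h
      · exact hx hzL
      · rw [Finset.mem_singleton] at h; exact hy (h ▸ hzL))
  rw [Finset.filter_union, Finset.card_union_of_disjoint hdisj, hpair]
  omega

lemma card_union_pair (L : Finset ℕ) (x y : ℕ) (hx : x ∉ L) (hy : y ∉ L) (hxy : x ≠ y) :
    (L ∪ {x, y}).card = L.card + 2 := by
  have := card_filter_union_pair L x y hx hy hxy (fun _ => True)
  simpa using this

lemma mem_homSet (I J : Finset ℕ) (d : ℕ) (hdI : d ≤ I.card) (hdJ : d ≤ J.card)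
    (h : ∀ s < d, (Finset.sort I (· ≤ ·)).getD s 0
      ≤ (Finset.sort J (· ≤ ·)).getD (J.card - d + s) 0) :
    d ≤ min I.card J.card ∧ PrecLE (smallSet I d) (largeSet J d) := by
  refine ⟨le_min hdI hdJ, ?_, ?_⟩
  · rw [card_smallSet _ _ hdI, card_largeSet _ _ hdJ]
  · intro s hs
    rw [card_smallSet _ _ hdI] at hs
    rw [sort_smallSet, sort_largeSet, getD_take' _ _ _ hs (by rw [Finset.length_sort]; omega),
      getD_drop' _ _ _ (by rw [Finset.length_sort]; omega)]
    exact h s hs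

/-- **Hom dimensions for a geometric-exchange pair.**  For `L ⊆ [n]` and
`a < b < c < d` in `[n] \ L`, one has `h(Lac, Lbd) = |L| + 2` and
`h(Lbd, Lac) = |L| + 1`; consequently
`h(Lac,Lbd) + h(Lbd,Lac) − |Lac ∩ Lbd| − min(|Lac|,|Lbd|) = 1`
(i.e. `dim ext¹(M_{Lac}, M_{Lbd}) = 1`). -/
theorem homDim_geometric_exchange_pair (n : ℕ) (hn : 4 ≤ n)
    (L : Finset ℕ) (hL : L ⊆ Finset.Icc 1 n) (a b c d : ℕ)
    (ha : a ∈ Finset.Icc 1 n) (hb : b ∈ Finset.Icc 1 n)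
    (hc : c ∈ Finset.Icc 1 n) (hd : d ∈ Finset.Icc 1 n)
    (haL : a ∉ L) (hbL : b ∉ L) (hcL : c ∉ L) (hdL : d ∉ L)
    (hab : a < b) (hbc : b < c) (hcd : c < d) :
    homDim (L ∪ {a, c}) (L ∪ {b, d}) = L.card + 2 ∧
    homDim (L ∪ {b, d}) (L ∪ {a, c}) = L.card + 1 ∧
    (homDim (L ∪ {a, c}) (L ∪ {b, d}) : ℤ) + (homDim (L ∪ {b, d}) (L ∪ {a, c}) : ℤ)
      - (((L ∪ {a, c}) ∩ (L ∪ {b, d})).card : ℤ)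
      - (min (L ∪ {a, c}).card (L ∪ {b, d}).card : ℤ) = 1 := by
  set I := L ∪ {a, c} with hI
  set J := L ∪ {b, d} with hJ
  have hac : a ≠ c := by omega
  have hbd : b ≠ d := by omega
  have hIcard : I.card = L.card + 2 := card_union_pair L a c haL hcL hac
  have hJcard : J.card = L.card + 2 := card_union_pair L b d hbL hdL hbd
  have hIf : ∀ m, (I.filter (· < m)).card
      = (L.filter (· < m)).card + (if a < m then 1 else 0) + (if c < m then 1 else 0) :=
    fun m => card_filter_union_pair L a c haL hcL hac _
  have hJf : ∀ m, (J.filter (· < m)).card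
      = (L.filter (· < m)).card + (if b < m then 1 else 0) + (if d < m then 1 else 0) :=
    fun m => card_filter_union_pair L b d hbL hdL hbd _
  have claim1 : ∀ s < L.card + 2,
      (Finset.sort I (· ≤ ·)).getD s 0 ≤ (Finset.sort J (· ≤ ·)).getD s 0 := by
    intro s hs
    by_contra hcon
    push_neg at hcon
    set m := (Finset.sort I (· ≤ ·)).getD s 0 with hm
    have h1 : s < (J.filter (· < m)).card := (getD_sort_lt_iff J s m (by omega)).1 hcon
    have h2 : (I.filter (· < m)).card ≤ s := by
      by_contra hx
      push_neg at hx
      have := (getD_sort_lt_iff I s m (by omega)).2 hx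
      omega
    rw [hJf] at h1
    rw [hIf] at h2
    have e1 : b < m → a < m := fun h => by omega
    have e2 : d < m → c < m := fun h => by omega
    split_ifs at h1 h2 <;> omega
  have claim2 : ∀ s < L.card + 1,
      (Finset.sort J (· ≤ ·)).getD s 0 ≤ (Finset.sort I (· ≤ ·)).getD (s + 1) 0 := by
    intro s hs
    by_contra hcon
    push_neg at hcon
    set m := (Finset.sort J (· ≤ ·)).getD s 0 with hm
    have h1 : s + 1 < (I.filter (· < m)).card :=
      (getD_sort_lt_iff I (s + 1) m (by omega)).1 hcon
    have h2 : (J.filter (· < m)).card ≤ s := by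
      by_contra hx
      push_neg at hx
      have := (getD_sort_lt_iff J s m (by omega)).2 hx
      omega
    rw [hIf] at h1
    rw [hJf] at h2
    have e1 : c < m → b < m := fun h => by omega
    have e2 : d < m → b < m := fun h => by omega
    split_ifs at h1 h2 <;> omega
  have claim3 : ∃ s0, s0 < L.card + 2 ∧
      (Finset.sort I (· ≤ ·)).getD s0 0 < (Finset.sort J (· ≤ ·)).getD s0 0 := by
    refine ⟨(L.filter (· < b)).card, ?_, ?_⟩
    · have := Finset.card_filter_le L (· < b)
      omega
    · have hs0 : (L.filter (· < b)).card ≤ L.card := Finset.card_filter_le _ _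
      have hIs : (Finset.sort I (· ≤ ·)).getD (L.filter (· < b)).card 0 < b := by
        rw [getD_sort_lt_iff I _ b (by omega), hIf]
        split_ifs <;> omega
      have hJs : ¬ ((Finset.sort J (· ≤ ·)).getD (L.filter (· < b)).card 0 < b) := by
        rw [getD_sort_lt_iff J _ b (by omega), hJf]
        split_ifs <;> omega
      omega
  have h1 : homDim I J = L.card + 2 := by
    apply IsGreatest.csSup_eq
    constructor
    · apply mem_homSet I J _ (by omega) (by omega)
      intro s hs
      have hz : J.card - (L.card + 2) + s = s := by omega
      rw [hz]
      exact claim1 s hs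
    · intro x hx
      have := hx.1
      omega
  have h2 : homDim J I = L.card + 1 := by
    apply IsGreatest.csSup_eq
    constructor
    · apply mem_homSet J I _ (by omega) (by omega)
      intro s hs
      have hz : I.card - (L.card + 1) + s = s + 1 := by omega
      rw [hz]
      exact claim2 s hs
    · rintro x ⟨hx1, hx2⟩
      by_contra hgt
      push_neg at hgt
      have hx : x = L.card + 2 := by omega
      subst hx
      obtain ⟨s0, hs0, hlt⟩ := claim3
      have hcard : (smallSet J (L.card + 2)).card = L.card + 2 := card_smallSet _ _ (by omega)
      have hle := hx2.2 s0 (by rw [hcard]; omega)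
      rw [sort_smallSet, sort_largeSet,
        getD_take' _ _ _ hs0 (by rw [Finset.length_sort]; omega)] at hle
      have hz : I.card - (L.card + 2) = 0 := by omega
      rw [hz, List.drop_zero] at hle
      omega
  have hinter : I ∩ J = L := by
    ext x
    simp only [hI, hJ, Finset.mem_inter, Finset.mem_union, Finset.mem_insert,
      Finset.mem_singleton]
    constructor
    · rintro ⟨h1', h2'⟩
      rcases h1' with h | rfl | rfl
      · exact h
      · rcases h2' with h | rfl | rfl
        · exact absurd h haL
        · omega
        · omega
      · rcases h2' with h | rfl | rfl
        · exact absurd h hcL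
        · omega
        · omega
    · exact fun h => ⟨Or.inl h, Or.inl h⟩
  refine ⟨h1, h2, ?_⟩
  rw [h1, h2, hinter, hIcard, hJcard]
  push_cast
  omega
end

section
/- Let n ≥ 3, let L ⊆ [n], and let i < j < k be elements of [n] \ L. Then h(Lj, Lik) = |L| + 1 = h(Lik, Lj). Consequently h(Lj, Lik) + h(Lik, Lj) − |Lj ∩ Lik| − min(|Lj|, |Lik|) = 1. -/
lemma sorted_getD_le_iff (v : ℕ) : ∀ (l : List ℕ), l.Pairwise (· ≤ ·) → ∀ s, s < l.length →
    (l.getD s 0 ≤ v ↔ s < (l.filter (fun x => x ≤ v)).length) := by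
  intro l
  induction l with
  | nil => intro _ s hs; simp at hs
  | cons a t ih =>
    intro hl s hs
    rw [List.pairwise_cons] at hl
    obtain ⟨ha, ht⟩ := hl
    cases s with
    | zero =>
      simp only [List.getD_cons_zero, List.filter_cons]
      by_cases hav : a ≤ v
      · simp [hav]
      · have htf : t.filter (fun x => x ≤ v) = [] := by
          rw [List.filter_eq_nil_iff]
          intro x hx
          simp only [decide_eq_true_eq]
          intro hxv
          exact hav (le_trans (ha x hx) hxv)
        simp [hav, htf]
    | succ s =>
      have hs' : s < t.length := by simpa using hs
      simp only [List.getD_cons_succ, List.filter_cons]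
      rw [ih ht s hs']
      by_cases hav : a ≤ v
      · simp [hav, Nat.succ_lt_succ_iff]
      · have htf : t.filter (fun x => x ≤ v) = [] := by
          rw [List.filter_eq_nil_iff]
          intro x hx
          simp only [decide_eq_true_eq]
          intro hxv
          exact hav (le_trans (ha x hx) hxv)
        simp [hav, htf]

lemma finset_getD_le_iff (A : Finset ℕ) (v : ℕ) {s : ℕ} (hs : s < A.card) :
    (Finset.sort A (· ≤ ·)).getD s 0 ≤ v ↔ s < (A.filter (· ≤ v)).card := by
  rw [sorted_getD_le_iff v _ (Finset.pairwise_sort _ _) s (by simpa using hs)]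
  have h1 : ((Finset.sort A (· ≤ ·)).filter (fun x => x ≤ v)).toFinset = A.filter (· ≤ v) := by
    ext x; simp
  rw [← h1, List.toFinset_card_of_nodup (List.Nodup.filter _ (Finset.sort_nodup A (· ≤ ·)))]

lemma filter_union_singleton_card (L : Finset ℕ) (a : ℕ) (ha : a ∉ L) (v : ℕ) :
    ((L ∪ {a}).filter (· ≤ v)).card
      = (L.filter (· ≤ v)).card + (if a ≤ v then 1 else 0) := by
  rw [Finset.filter_union,
    Finset.card_union_of_disjoint
      (Finset.disjoint_filter_filter (Finset.disjoint_singleton_right.mpr ha))]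
  congr 1
  rw [Finset.filter_singleton]
  by_cases h : a ≤ v <;> simp [h]

/-- **Hom dimensions for a flip pair.**  For `L ⊆ [n]` and `i < j < k` in `[n] \ L`,
one has `h(Lj, Lik) = |L| + 1 = h(Lik, Lj)`; consequently
`h(Lj,Lik) + h(Lik,Lj) − |Lj ∩ Lik| − min(|Lj|,|Lik|) = 1`
(i.e. `dim ext¹(M_{Lj}, M_{Lik}) = 1`). -/
theorem homDim_flip_pair (n : ℕ) (hn : 3 ≤ n)
    (L : Finset ℕ) (hL : L ⊆ Finset.Icc 1 n) (i j k : ℕ)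
    (hi : i ∈ Finset.Icc 1 n) (hj : j ∈ Finset.Icc 1 n) (hk : k ∈ Finset.Icc 1 n)
    (hiL : i ∉ L) (hjL : j ∉ L) (hkL : k ∉ L)
    (hij : i < j) (hjk : j < k) :
    homDim (L ∪ {j}) (L ∪ {i, k}) = L.card + 1 ∧
    homDim (L ∪ {i, k}) (L ∪ {j}) = L.card + 1 ∧
    (homDim (L ∪ {j}) (L ∪ {i, k}) : ℤ) + (homDim (L ∪ {i, k}) (L ∪ {j}) : ℤ)
      - (((L ∪ {j}) ∩ (L ∪ {i, k})).card : ℤ)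
      - (min (L ∪ {j}).card (L ∪ {i, k}).card : ℤ) = 1 := by
  set m := L.card with hm
  set A := L ∪ {j} with hAdef
  set B := L ∪ {i, k} with hBdef
  have hik : i ≠ k := by omega
  have hA : A.card = m + 1 := by
    rw [hAdef, Finset.card_union_of_disjoint (Finset.disjoint_singleton_right.mpr hjL),
      Finset.card_singleton]
  have hBsplit : B = (L ∪ {i}) ∪ {k} := by
    rw [hBdef, Finset.insert_eq, ← Finset.union_assoc]
  have hkLi : k ∉ L ∪ {i} := by simp [hkL, hik.symm, (by omega : ¬ k = i)]
  have hB : B.card = m + 2 := by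
    rw [hBsplit, Finset.card_union_of_disjoint (Finset.disjoint_singleton_right.mpr hkLi),
      Finset.card_union_of_disjoint (Finset.disjoint_singleton_right.mpr hiL)]
    simp [hm]
  have hAv : ∀ v, (A.filter (· ≤ v)).card
      = (L.filter (· ≤ v)).card + (if j ≤ v then 1 else 0) :=
    fun v => filter_union_singleton_card L j hjL v
  have hBv : ∀ v, (B.filter (· ≤ v)).card
      = (L.filter (· ≤ v)).card + (if i ≤ v then 1 else 0) + (if k ≤ v then 1 else 0) := by
    intro v
    rw [hBsplit, filter_union_singleton_card _ k hkLi v, filter_union_singleton_card L i hiL v]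
  -- smallSet A (m+1) = A
  have hsmallA : smallSet A (m + 1) = A := by
    unfold smallSet
    rw [List.take_of_length_le (by simp [hA]), Finset.sort_toFinset]
  -- largeSet A (m+1) = A
  have hlargeA : largeSet A (m + 1) = A := by
    unfold largeSet
    rw [hA, Nat.sub_self, List.drop_zero, Finset.sort_toFinset]
  -- largeSet B (m+1)
  set lB : List ℕ := (Finset.sort B (· ≤ ·)).drop 1 with hlB
  have hlBnodup : lB.Nodup := (List.drop_sublist 1 _).nodup (Finset.sort_nodup B _)
  have hlBsorted : lB.Pairwise (· ≤ ·) :=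
    List.Pairwise.sublist (List.drop_sublist 1 _) (Finset.pairwise_sort B _)
  have hlargeB : largeSet B (m + 1) = lB.toFinset := by
    unfold largeSet
    rw [hB]
    have : m + 2 - (m + 1) = 1 := by omega
    rw [this]
  have hsortlB : Finset.sort lB.toFinset (· ≤ ·) = lB :=
    (List.toFinset_sort _ hlBnodup).mpr hlBsorted
  have hlBlen : lB.length = m + 1 := by
    rw [hlB, List.length_drop, Finset.length_sort, hB]
    omega
  -- smallSet B (m+1)
  set sB : List ℕ := (Finset.sort B (· ≤ ·)).take (m + 1) with hsB
  have hsBnodup : sB.Nodup := (List.take_sublist (m+1) _).nodup (Finset.sort_nodup B _)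
  have hsBsorted : sB.Pairwise (· ≤ ·) :=
    List.Pairwise.sublist (List.take_sublist (m+1) _) (Finset.pairwise_sort B _)
  have hsmallB : smallSet B (m + 1) = sB.toFinset := rfl
  have hsortsB : Finset.sort sB.toFinset (· ≤ ·) = sB :=
    (List.toFinset_sort _ hsBnodup).mpr hsBsorted
  have hsBlen : sB.length = m + 1 := by
    rw [hsB, List.length_take, Finset.length_sort, hB]
    omega
  -- PrecLE 1 : smallSet A (m+1) ⪯ largeSet B (m+1)
  have prec1 : PrecLE (smallSet A (m + 1)) (largeSet B (m + 1)) := by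
    rw [hsmallA, hlargeB]
    constructor
    · rw [hA, List.toFinset_card_of_nodup hlBnodup, hlBlen]
    · intro s hs
      rw [hA] at hs
      rw [hsortlB]
      have hgd : lB.getD s 0 = (Finset.sort B (· ≤ ·)).getD (s + 1) 0 := by
        simp [hlB, List.getD_eq_getElem?_getD, List.getElem?_drop, Nat.add_comm]
      rw [hgd]
      set v := (Finset.sort B (· ≤ ·)).getD (s + 1) 0 with hv
      have h1 : s + 1 < (B.filter (· ≤ v)).card :=
        (finset_getD_le_iff B v (by omega)).mp le_rfl
      rw [hBv v] at h1
      refine (finset_getD_le_iff A v (by omega)).mpr ?_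
      rw [hAv v]
      by_cases hkv : k ≤ v
      · have hjv : j ≤ v := le_trans hjk.le hkv
        have hiv : i ≤ v := le_trans (hij.trans hjk).le hkv
        rw [if_pos hiv, if_pos hkv] at h1
        rw [if_pos hjv]
        omega
      · rw [if_neg hkv] at h1
        split_ifs at h1 with h <;> split_ifs <;> omega
  -- PrecLE 2 : smallSet B (m+1) ⪯ largeSet A (m+1)
  have prec2 : PrecLE (smallSet B (m + 1)) (largeSet A (m + 1)) := by
    rw [hsmallB, hlargeA]
    constructor
    · rw [List.toFinset_card_of_nodup hsBnodup, hsBlen, hA]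
    · intro s hs
      rw [List.toFinset_card_of_nodup hsBnodup, hsBlen] at hs
      rw [hsortsB]
      have hgd : sB.getD s 0 = (Finset.sort B (· ≤ ·)).getD s 0 := by
        simp [hsB, List.getD_eq_getElem?_getD, List.getElem?_take, hs]
      rw [hgd]
      set v := (Finset.sort A (· ≤ ·)).getD s 0 with hv
      have h1 : s < (A.filter (· ≤ v)).card :=
        (finset_getD_le_iff A v (by omega)).mp le_rfl
      rw [hAv v] at h1
      refine (finset_getD_le_iff B v (by omega)).mpr ?_
      rw [hBv v]
      by_cases hjv : j ≤ v
      · have hiv : i ≤ v := le_trans hij.le hjv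
        rw [if_pos hjv] at h1
        rw [if_pos hiv]
        split_ifs <;> omega
      · rw [if_neg hjv] at h1
        split_ifs <;> omega
  -- homDim values
  have hd1 : homDim A B = m + 1 := by
    unfold homDim
    have hmem : m + 1 ∈ {d | d ≤ min A.card B.card ∧ PrecLE (smallSet A d) (largeSet B d)} :=
      ⟨by rw [hA, hB]; omega, prec1⟩
    have hub : ∀ d ∈ {d | d ≤ min A.card B.card ∧ PrecLE (smallSet A d) (largeSet B d)},
        d ≤ m + 1 := by
      intro d hd
      have := hd.1
      rw [hA, hB] at this
      omega
    exact le_antisymm (csSup_le ⟨_, hmem⟩ hub) (le_csSup ⟨m + 1, hub⟩ hmem)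
  have hd2 : homDim B A = m + 1 := by
    unfold homDim
    have hmem : m + 1 ∈ {d | d ≤ min B.card A.card ∧ PrecLE (smallSet B d) (largeSet A d)} :=
      ⟨by rw [hA, hB]; omega, prec2⟩
    have hub : ∀ d ∈ {d | d ≤ min B.card A.card ∧ PrecLE (smallSet B d) (largeSet A d)},
        d ≤ m + 1 := by
      intro d hd
      have := hd.1
      rw [hA, hB] at this
      omega
    exact le_antisymm (csSup_le ⟨_, hmem⟩ hub) (le_csSup ⟨m + 1, hub⟩ hmem)
  have hInter : A ∩ B = L := by
    ext x
    rw [hAdef, hBdef]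
    simp only [Finset.mem_inter, Finset.mem_union, Finset.mem_singleton, Finset.mem_insert]
    constructor
    · rintro ⟨hx1 | rfl, hx2⟩
      · exact hx1
      · rcases hx2 with h | h | h
        · exact absurd h hjL
        · omega
        · omega
    · intro hx; exact ⟨Or.inl hx, Or.inl hx⟩
  refine ⟨hd1, hd2, ?_⟩
  rw [hd1, hd2, hInter, hA, hB]
  push_cast
  omega
end

section
/- Let n ≥ 2 and K ⊆ {1,…,n−1}. Then the element w₀·w₀^K of the symmetric group S_n admits a reduced word that is a concatenation I_m ⋯ I_1 of interval words I_i = ⟨a_i … b_i⟩ such that for every i > 1, the letter b_i does not occur among the letters of I_{i−1}, …, I_1, while every letter of I_i other than b_i does occur among the letters of I_{i−1}, …, I_1. Consequently, for each i, the union of the letter sets of I_1, …, I_i is an integer interval inside {1,…,n−1}. -/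
/-- The adjacent transposition `s_i`, swapping `i` and `i+1` (as a permutation of `ℕ`). -/
def sSwap (i : ℕ) : Equiv.Perm ℕ := Equiv.swap i (i + 1)

/-- The permutation represented by a word `(i_m, …, i_1)` (leftmost letter applied last):
`wordProd [i_m, …, i_1] = s_{i_m} ⋯ s_{i_1}`. -/
def wordProd (l : List ℕ) : Equiv.Perm ℕ := (l.map sSwap).prod

/-- A word with letters in `{1, …, n−1}`. -/
def IsWord (n : ℕ) (l : List ℕ) : Prop := ∀ i ∈ l, 1 ≤ i ∧ i ≤ n - 1

/-- The Coxeter length of a permutation of `[n]`: the minimal `m` such that it is a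
product of `m` adjacent transpositions `s_1, …, s_{n−1}`. -/
noncomputable def lengthPermN (n : ℕ) (w : Equiv.Perm ℕ) : ℕ :=
  sInf {m | ∃ l : List ℕ, IsWord n l ∧ l.length = m ∧ wordProd l = w}

/-- `l` is a reduced word for `w` in `S_n`. -/
def IsReducedWord (n : ℕ) (l : List ℕ) (w : Equiv.Perm ℕ) : Prop :=
  IsWord n l ∧ wordProd l = w ∧ l.length = lengthPermN n w

/-- The underlying function of the longest element `w₀` of `S_n`:
`x ↦ n+1−x` on `[n]`, identity elsewhere. -/
def w0Fun (n : ℕ) (x : ℕ) : ℕ := if 1 ≤ x ∧ x ≤ n then n + 1 - x else x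

theorem w0Fun_involutive (n : ℕ) : Function.Involutive (w0Fun n) := by
  intro x
  simp only [w0Fun]
  split_ifs <;> omega

/-- The longest element `w₀` of `S_n`, viewed as a permutation of `ℕ` fixing everything
outside `[n]`. -/
def w0 (n : ℕ) : Equiv.Perm ℕ :=
  Function.Involutive.toPerm (w0Fun n) (w0Fun_involutive n)

/-- The start of the `K`-block of `x`: the least `a ≤ x` with `{a, …, x−1} ⊆ K`. -/
noncomputable def blockStart (K : Finset ℕ) (x : ℕ) : ℕ :=
  sInf {a | a ≤ x ∧ ∀ y, a ≤ y → y < x → y ∈ K}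

/-- The end of the `K`-block of `x`: the greatest `b ≥ x` with `{x, …, b−1} ⊆ K`. -/
noncomputable def blockEnd (K : Finset ℕ) (x : ℕ) : ℕ :=
  sSup {b | x ≤ b ∧ ∀ y, x ≤ y → y < b → y ∈ K}

/-- The underlying function of the longest element `w₀^K` of the parabolic subgroup of
`S_n` generated by `{s_i : i ∈ K}`: writing `K` as a disjoint union of maximal intervals
`[c_i, d_i]`, it sends `x ∈ [c_i, d_i+1]` to `c_i + d_i + 1 − x` and fixes all other
points. -/
noncomputable def w0KFun (K : Finset ℕ) (x : ℕ) : ℕ :=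
  blockStart K x + blockEnd K x - x

/-- The interval word `⟨a … b⟩`: the word whose letters go monotonically from `a` to `b`
in steps of `1` (first letter `a`, last letter `b`). -/
def intervalWord (a b : ℕ) : List ℕ :=
  if a ≤ b then List.range' a (b + 1 - a) else (List.range' b (a + 1 - b)).reverse

section Blocks

variable (K : Finset ℕ)

lemma bs_mem (x : ℕ) : blockStart K x ∈ {a | a ≤ x ∧ ∀ y, a ≤ y → y < x → y ∈ K} :=
  Nat.sInf_mem ⟨x, le_refl x, fun y hy hy' => absurd hy' (by omega)⟩

lemma bs_le (x : ℕ) : blockStart K x ≤ x := (bs_mem K x).1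

lemma bs_edges {x y : ℕ} (h1 : blockStart K x ≤ y) (h2 : y < x) : y ∈ K :=
  (bs_mem K x).2 y h1 h2

lemma bs_pred_not_mem {x : ℕ} (h : 1 ≤ blockStart K x) : blockStart K x - 1 ∉ K := by
  intro hmem
  have : blockStart K x ≤ blockStart K x - 1 := by
    apply Nat.sInf_le
    refine ⟨by have := bs_le K x; omega, fun y hy hy' => ?_⟩
    rcases Nat.eq_or_lt_of_le hy with h' | h'
    · rwa [← h']
    · exact bs_edges K (by omega) hy'
  omega

lemma bs_pos {x : ℕ} (h0 : 0 ∉ K) (hx : 1 ≤ x) : 1 ≤ blockStart K x := by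
  by_contra h
  exact h0 (bs_edges K (x := x) (by omega) (by omega))

lemma be_bdd {B : ℕ} (hB : ∀ y ∈ K, y ≤ B) (x : ℕ) :
    BddAbove {b | x ≤ b ∧ ∀ y, x ≤ y → y < b → y ∈ K} := by
  refine ⟨max x (B + 1), fun b hb => ?_⟩
  rcases Nat.lt_or_ge x b with h | h
  · have : b - 1 ∈ K := hb.2 _ (by omega) (by omega)
    have := hB _ this
    simp only [le_max_iff]; omega
  · simp only [le_max_iff]; omega

variable {B : ℕ} (hB : ∀ y ∈ K, y ≤ B)
include hB

lemma be_mem (x : ℕ) : blockEnd K x ∈ {b | x ≤ b ∧ ∀ y, x ≤ y → y < b → y ∈ K} :=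
  Nat.sSup_mem ⟨x, le_refl x, fun y hy hy' => absurd hy' (by omega)⟩ (be_bdd K hB x)

lemma be_ge (x : ℕ) : x ≤ blockEnd K x := (be_mem K hB x).1

lemma be_edges {x y : ℕ} (h1 : x ≤ y) (h2 : y < blockEnd K x) : y ∈ K :=
  (be_mem K hB x).2 y h1 h2

lemma be_not_mem (x : ℕ) : blockEnd K x ∉ K := by
  intro hmem
  have : blockEnd K x + 1 ≤ blockEnd K x := by
    apply le_csSup (be_bdd K hB x)
    refine ⟨by have := be_ge K hB x; omega, fun y hy hy' => ?_⟩
    rcases Nat.lt_or_ge y (blockEnd K x) with h' | h'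
    · exact be_edges K hB hy h'
    · have : y = blockEnd K x := by omega
      rwa [this]
  omega

lemma be_le {x : ℕ} (hx : x ≤ B + 1) : blockEnd K x ≤ B + 1 := by
  rcases Nat.lt_or_ge x (blockEnd K x) with h | h
  · have := hB _ (be_edges K hB (x := x) (y := blockEnd K x - 1) (by omega) (by omega))
    omega
  · omega

lemma bs_between {x z : ℕ} (h1 : blockStart K x ≤ z) (h2 : z ≤ blockEnd K x) :
    blockStart K z = blockStart K x := by
  have hbsx := bs_le K x
  have hbex := be_ge K hB x
  have hle : blockStart K z ≤ blockStart K x := by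
    apply Nat.sInf_le
    refine ⟨h1, fun y hy hy' => ?_⟩
    rcases Nat.lt_or_ge y x with h' | h'
    · exact bs_edges K hy h'
    · exact be_edges K hB h' (by omega)
  have hge : blockStart K x ≤ blockStart K z := by
    apply Nat.sInf_le
    refine ⟨by omega, fun y hy hy' => ?_⟩
    rcases Nat.lt_or_ge y z with h' | h'
    · exact bs_edges K (x := z) (by omega) h'
    · exact bs_edges K (x := x) (by omega) (by omega)
  omega

lemma be_between {x z : ℕ} (h1 : blockStart K x ≤ z) (h2 : z ≤ blockEnd K x) :
    blockEnd K z = blockEnd K x := by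
  have hbsx := bs_le K x
  have hbex := be_ge K hB x
  have hge : blockEnd K x ≤ blockEnd K z := by
    apply le_csSup (be_bdd K hB z)
    refine ⟨h2, fun y hy hy' => ?_⟩
    rcases Nat.lt_or_ge y x with h' | h'
    · exact bs_edges K (by omega) h'
    · exact be_edges K hB h' hy'
  have hle : blockEnd K z ≤ blockEnd K x := by
    apply le_csSup (be_bdd K hB x)
    refine ⟨by omega, fun y hy hy' => ?_⟩
    rcases Nat.lt_or_ge y z with h' | h'
    · exact be_edges K hB (x := x) (by omega) (by omega)
    · exact be_edges K hB (x := z) h' hy'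
  omega

lemma w0KFun_invol (h0 : 0 ∉ K) : Function.Involutive (w0KFun K) := by
  intro x
  rcases Nat.eq_zero_or_pos x with rfl | hx
  · have hbs : blockStart K 0 = 0 := by have := bs_le K 0; omega
    have hbe : blockEnd K 0 = 0 := by
      by_contra h
      have := be_ge K hB 0
      exact h0 (be_edges K hB (x := 0) (y := 0) (le_refl 0) (by omega))
    simp [w0KFun, hbs, hbe]
  · have h1 := bs_le K x
    have h2 := be_ge K hB x
    have h3 : blockStart K x ≤ blockStart K x + blockEnd K x - x := by omega
    have h4 : blockStart K x + blockEnd K x - x ≤ blockEnd K x := by omega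
    simp only [w0KFun]
    rw [bs_between K hB h3 h4, be_between K hB h3 h4]
    omega

end Blocks
section Filtered

variable (K : Finset ℕ)

lemma sup_bound : ∀ y ∈ K, y ≤ K.sup id := fun y hy => Finset.le_sup (f := id) hy

/-- `K` truncated below `q`. -/
def Kfil (q : ℕ) : Finset ℕ := K.filter (· < q)

lemma Kfil_zero_not_mem (h0 : 0 ∉ K) (q : ℕ) : 0 ∉ Kfil K q := by
  simp only [Kfil, Finset.mem_filter]; tauto

lemma bs_Kfil {q x : ℕ} (hx : x ≤ q) : blockStart (Kfil K q) x = blockStart K x := by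
  unfold blockStart
  congr 1
  ext a
  simp only [Set.mem_setOf_eq, Kfil, Finset.mem_filter]
  exact ⟨fun ⟨h1, h2⟩ => ⟨h1, fun y hy hy' => (h2 y hy hy').1⟩,
    fun ⟨h1, h2⟩ => ⟨h1, fun y hy hy' => ⟨h2 y hy hy', by omega⟩⟩⟩

lemma be_Kfil {q x : ℕ} (hx : x ≤ q) :
    blockEnd (Kfil K q) x = min (blockEnd K x) q := by
  have hB := sup_bound K
  have hge := be_ge K hB x
  have hne : {b | x ≤ b ∧ ∀ y, x ≤ y → y < b → y ∈ Kfil K q}.Nonempty :=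
    ⟨x, le_refl x, fun y hy hy' => absurd hy' (by omega)⟩
  apply le_antisymm
  · apply csSup_le hne
    intro b hb
    have hbq : b ≤ q := by
      by_contra h
      have := hb.2 q hx (by omega)
      simp only [Kfil, Finset.mem_filter] at this
      omega
    have hbe : b ≤ blockEnd K x := by
      apply le_csSup (be_bdd K hB x)
      exact ⟨hb.1, fun y hy hy' => (Finset.mem_filter.1 (hb.2 y hy hy')).1⟩
    omega
  · apply le_csSup (be_bdd (Kfil K q) (sup_bound _) x)
    refine ⟨by omega, fun y hy hy' => ?_⟩
    simp only [Kfil, Finset.mem_filter]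
    exact ⟨be_edges K hB hy (by omega), by omega⟩

lemma bs_Kfil_gt {q x : ℕ} (hx : q < x) : blockStart (Kfil K q) x = x := by
  have h1 := bs_le (Kfil K q) x
  rcases Nat.eq_or_lt_of_le h1 with h | h
  · exact h
  · have := bs_edges (Kfil K q) (x := x) (y := x - 1) (by omega) (by omega)
    simp only [Kfil, Finset.mem_filter] at this
    omega

lemma be_Kfil_ge {q x : ℕ} (hx : q ≤ x) : blockEnd (Kfil K q) x = x := by
  have hB := sup_bound (Kfil K q)
  have h1 := be_ge (Kfil K q) hB x
  rcases Nat.eq_or_lt_of_le h1 with h | h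
  · omega
  · have := be_edges (Kfil K q) hB (x := x) (y := x) (le_refl x) h
    simp only [Kfil, Finset.mem_filter] at this
    omega

end Filtered

section UPerm

variable (K : Finset ℕ) (h0 : 0 ∉ K)

/-- The permutation `w₀^K`. -/
noncomputable def w0KPerm : Equiv.Perm ℕ :=
  Function.Involutive.toPerm (w0KFun K) (w0KFun_invol K (sup_bound K) h0)

lemma w0KPerm_apply (x : ℕ) : w0KPerm K h0 x = w0KFun K x := rfl

/-- The partial product permutation after processing letters `p₁, …, q−1`. -/
noncomputable def uPerm (q : ℕ) : Equiv.Perm ℕ :=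
  w0 q * w0KPerm (Kfil K q) (Kfil_zero_not_mem K h0 q)

lemma uPerm_apply_le {q x : ℕ} (hx1 : 1 ≤ x) (hxq : x ≤ q) :
    uPerm K h0 q x = q + 1 + x - blockStart K x - min (blockEnd K x) q := by
  have hB := sup_bound K
  have hbs := bs_le K x
  have hbe := be_ge K hB x
  have hbs1 := bs_pos K h0 hx1
  simp only [uPerm, Equiv.Perm.mul_apply, w0KPerm_apply, w0KFun,
    bs_Kfil K hxq, be_Kfil K hxq]
  show w0Fun q _ = _
  simp only [w0Fun]
  split_ifs with h <;> omega

lemma uPerm_apply_gt {q x : ℕ} (hx : q < x) : uPerm K h0 q x = x := by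
  simp only [uPerm, Equiv.Perm.mul_apply, w0KPerm_apply, w0KFun,
    bs_Kfil_gt K hx, be_Kfil_ge K (by omega : q ≤ x)]
  show w0Fun q _ = _
  simp only [w0Fun]
  split_ifs with h <;> omega

lemma uPerm_apply_zero (q : ℕ) : uPerm K h0 q 0 = 0 := by
  have hbs : blockStart (Kfil K q) 0 = 0 := by have := bs_le (Kfil K q) 0; omega
  have hbe : blockEnd (Kfil K q) 0 = 0 := by
    have hB := sup_bound (Kfil K q)
    have h1 := be_ge (Kfil K q) hB 0
    by_contra h
    exact Kfil_zero_not_mem K h0 q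
      (be_edges (Kfil K q) hB (x := 0) (y := 0) (le_refl 0) (by omega))
  simp only [uPerm, Equiv.Perm.mul_apply, w0KPerm_apply, w0KFun, hbs, hbe]
  show w0Fun q 0 = 0
  simp [w0Fun]

end UPerm
section Words

lemma wordProd_nil : wordProd [] = 1 := rfl

lemma wordProd_cons (a : ℕ) (l : List ℕ) : wordProd (a :: l) = sSwap a * wordProd l := by
  simp [wordProd]

lemma wordProd_append (l1 l2 : List ℕ) : wordProd (l1 ++ l2) = wordProd l1 * wordProd l2 := by
  simp [wordProd]

lemma wordProd_range'_apply (k a x : ℕ) :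
    wordProd (List.range' a k) x =
      if a ≤ x ∧ x < a + k then x + 1 else if x = a + k then a else x := by
  induction k generalizing a x with
  | zero =>
    simp only [List.range'_zero, wordProd_nil, Equiv.Perm.one_apply]
    split_ifs <;> omega
  | succ k ih =>
    rw [List.range'_succ, wordProd_cons, Equiv.Perm.mul_apply, ih]
    simp only [sSwap, Equiv.swap_apply_def]
    split_ifs <;> omega

lemma intervalWord_eq_range' {a b : ℕ} (h : a ≤ b) :
    intervalWord a b = List.range' a (b + 1 - a) := if_pos h

lemma mem_intervalWord {a b x : ℕ} (h : a ≤ b) :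
    x ∈ intervalWord a b ↔ a ≤ x ∧ x ≤ b := by
  rw [intervalWord_eq_range', List.mem_range'] <;> try exact h
  constructor
  · rintro ⟨i, hi, rfl⟩; omega
  · intro ⟨h1, h2⟩; exact ⟨x - a, by omega, by omega⟩

lemma toFinset_intervalWord {a b : ℕ} (h : a ≤ b) :
    (intervalWord a b).toFinset = Finset.Icc a b := by
  ext x
  rw [List.mem_toFinset, mem_intervalWord h, Finset.mem_Icc]

lemma length_intervalWord {a b : ℕ} (h : a ≤ b) :
    (intervalWord a b).length = b + 1 - a := by
  rw [intervalWord_eq_range', List.length_range']; exact h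

end Words

section Step

variable (K : Finset ℕ) (h0 : 0 ∉ K)

lemma block_disjoint {q x : ℕ} (hx : x ≤ q) (hbex : blockEnd K x ≤ q) :
    blockEnd K x < blockStart K (q + 1) := by
  have hB := sup_bound K
  by_contra h
  push_neg at h
  have h1 : blockEnd K (blockEnd K x) = blockEnd K (q + 1) :=
    be_between K hB h (by have := be_ge K hB (q+1); omega)
  have h2 : blockEnd K (blockEnd K x) = blockEnd K x :=
    be_between K hB (by have := bs_le K x; have := be_ge K hB x; omega)
      (le_refl _)
  have := be_ge K hB (q + 1)
  omega

lemma uPerm_step {q : ℕ} (hq1 : 1 ≤ q) (hc : 2 ≤ blockStart K (q + 1)) :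
    uPerm K h0 (q + 1) =
      wordProd (intervalWord (q + 2 - blockStart K (q + 1)) q) * uPerm K h0 q := by
  have hB := sup_bound K
  set c := blockStart K (q + 1) with hcdef
  have hcle : c ≤ q + 1 := bs_le K (q + 1)
  have hbeq1 : q + 1 ≤ blockEnd K (q + 1) := be_ge K hB (q + 1)
  rw [intervalWord_eq_range' (by omega : q + 2 - c ≤ q)]
  have hk : q + 1 - (q + 2 - c) = c - 1 := by omega
  rw [hk]
  ext x
  rw [Equiv.Perm.mul_apply, wordProd_range'_apply]
  have hak : q + 2 - c + (c - 1) = q + 1 := by omega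
  rcases Nat.eq_zero_or_pos x with rfl | hx1
  · rw [uPerm_apply_zero, uPerm_apply_zero]
    split_ifs <;> omega
  rcases Nat.lt_or_ge (q + 1) x with hgt | hle
  · rw [uPerm_apply_gt K h0 hgt, uPerm_apply_gt K h0 (by omega)]
    split_ifs <;> omega
  rcases Nat.eq_or_lt_of_le hle with rfl | hlt
  · -- x = q+1
    rw [uPerm_apply_le K h0 hx1 (le_refl _), uPerm_apply_gt K h0 (by omega)]
    have hmin : min (blockEnd K (q + 1)) (q + 1) = q + 1 := by omega
    rw [hmin]
    split_ifs <;> omega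
  · -- 1 ≤ x ≤ q
    have hxq : x ≤ q := by omega
    rw [uPerm_apply_le K h0 hx1 (by omega), uPerm_apply_le K h0 hx1 hxq]
    have hbsx := bs_le K x
    have hbex := be_ge K hB x
    have hbs1 := bs_pos K h0 hx1
    rcases Nat.lt_or_ge q (blockEnd K x) with hbig | hsmall
    · -- same block as q+1
      have hbsq : blockStart K (q + 1) = blockStart K x :=
        bs_between K hB (by omega) (by omega)
      have hmin1 : min (blockEnd K x) (q + 1) = q + 1 ∨
          min (blockEnd K x) (q + 1) = blockEnd K x := by omega
      split_ifs <;> omega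
    · have hdisj : blockEnd K x < c := block_disjoint K hxq hsmall
      split_ifs <;> omega
end Step
section Chain

variable (K : Finset ℕ) (h0 : 0 ∉ K)
include h0

lemma bs_one : blockStart K 1 = 1 := by
  have := bs_le K 1
  have := bs_pos K h0 (le_refl 1)
  omega

lemma uPerm_base : uPerm K h0 (blockEnd K 1) = 1 := by
  have hB := sup_bound K
  have hp1 : 1 ≤ blockEnd K 1 := be_ge K hB 1
  ext x
  rw [Equiv.Perm.one_apply]
  rcases Nat.eq_zero_or_pos x with rfl | hx1
  · exact uPerm_apply_zero K h0 _
  rcases Nat.lt_or_ge (blockEnd K 1) x with hgt | hle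
  · exact uPerm_apply_gt K h0 hgt
  · rw [uPerm_apply_le K h0 hx1 hle]
    have hbs : blockStart K x = blockStart K 1 :=
      bs_between K hB (by rw [bs_one K h0]; omega) hle
    have hbe : blockEnd K x = blockEnd K 1 :=
      be_between K hB (by rw [bs_one K h0]; omega) hle
    rw [hbs, hbe, bs_one K h0]
    omega

lemma c_ge_two {q : ℕ} (hq : blockEnd K 1 ≤ q) : 2 ≤ blockStart K (q + 1) := by
  have hB := sup_bound K
  have h1 : 1 ≤ blockStart K (q + 1) := bs_pos K h0 (by omega)
  rcases Nat.eq_or_lt_of_le h1 with h | h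
  · exfalso
    have : q + 1 ≤ blockEnd K 1 := by
      apply le_csSup (be_bdd K hB 1)
      exact ⟨by omega, fun y hy hy' => bs_edges K (x := q + 1) (by omega) (by omega)⟩
    omega
  · omega

lemma uPerm_chain (j : ℕ) :
    uPerm K h0 (blockEnd K 1 + j) =
      wordProd ((List.ofFn (fun i : Fin j =>
        intervalWord (blockEnd K 1 + (i : ℕ) + 2 - blockStart K (blockEnd K 1 + (i : ℕ) + 1))
          (blockEnd K 1 + (i : ℕ)))).reverse.flatten) := by
  have hB := sup_bound K
  have hp1 : 1 ≤ blockEnd K 1 := be_ge K hB 1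
  induction j with
  | zero => simpa [wordProd_nil] using uPerm_base K h0
  | succ j ih =>
    rw [List.ofFn_succ']
    simp only [List.concat_eq_append, List.reverse_append, List.reverse_singleton,
      List.singleton_append, List.flatten_cons, wordProd_append, ← ih]
    simp only [Fin.coe_castSucc, Fin.val_last]
    have := uPerm_step K h0 (q := blockEnd K 1 + j) (by omega)
      (c_ge_two K h0 (by omega))
    rw [show blockEnd K 1 + (j + 1) = blockEnd K 1 + j + 1 by omega, this, ih]

end Chain
section Inversions

/-- The set of inversions of `w` inside `[1,n]`. -/
noncomputable def InvSet (n : ℕ) (w : Equiv.Perm ℕ) : Finset (ℕ × ℕ) :=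
  (Finset.Icc 1 n ×ˢ Finset.Icc 1 n).filter fun p => p.1 < p.2 ∧ w p.2 < w p.1

lemma swap_flip {i a b : ℕ} (hab : a < b)
    (h : Equiv.swap i (i + 1) b < Equiv.swap i (i + 1) a) : a = i ∧ b = i + 1 := by
  simp only [Equiv.swap_apply_def] at h
  split_ifs at h <;> omega

lemma card_InvSet_le (n : ℕ) (l : List ℕ) :
    (InvSet n (wordProd l)).card ≤ l.length := by
  induction l with
  | nil =>
    have h : InvSet n (wordProd []) = ∅ := by
      apply Finset.filter_false_of_mem
      intro p _
      rw [wordProd_nil]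
      simp only [Equiv.Perm.one_apply]
      omega
    simp [h]
  | cons i l ih =>
    set w := wordProd l with hw
    have hsub : InvSet n (wordProd (i :: l)) ⊆
        insert (w.symm i, w.symm (i + 1)) (InvSet n w) := by
      intro p hp
      rw [InvSet, Finset.mem_filter] at hp
      obtain ⟨hmem, hlt, hinv⟩ := hp
      rw [wordProd_cons] at hinv
      simp only [Equiv.Perm.mul_apply] at hinv
      rcases Nat.lt_or_ge (w p.2) (w p.1) with hcase | hcase
      · exact Finset.mem_insert_of_mem (Finset.mem_filter.2 ⟨hmem, hlt, hcase⟩)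
      · have hne : w p.1 ≠ w p.2 := fun h => by
          have := w.injective h; omega
        have hlt2 : w p.1 < w p.2 := by omega
        have hfl := swap_flip hlt2 hinv
        have h1 : p.1 = w.symm i := by rw [Equiv.eq_symm_apply]; exact hfl.1
        have h2 : p.2 = w.symm (i + 1) := by rw [Equiv.eq_symm_apply]; exact hfl.2
        have hp' : p = (w.symm i, w.symm (i + 1)) := by
          rcases p with ⟨x, y⟩
          simp only at h1 h2
          rw [h1, h2]
        rw [hp']
        exact Finset.mem_insert_self _ _
    calc (InvSet n (wordProd (i :: l))).card
        ≤ (insert (w.symm i, w.symm (i + 1)) (InvSet n w)).card :=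
          Finset.card_le_card hsub
      _ ≤ (InvSet n w).card + 1 := Finset.card_insert_le _ _
      _ ≤ l.length + 1 := by omega
      _ = (i :: l).length := by simp

end Inversions
/-- **Interval-word reduced expressions for `w₀·w₀^K`.**
For every `K ⊆ {1,…,n−1}`, the element `w₀·w₀^K` of `S_n` has a reduced word which is a
concatenation `I_m ⋯ I_1` of interval words `I_i = ⟨a_i … b_i⟩` (here indexed so that
`i : Fin m` with `i = 0` corresponding to `I_1`, the rightmost block) such that for every
`i > 1` the letter `b_i` does not occur among the letters of `I_{i−1}, …, I_1` while every
other letter of `I_i` does; consequently, for each `i` the union of the letter sets of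
`I_1, …, I_i` is an integer interval inside `{1,…,n−1}`. -/
theorem w0_mul_w0K_has_interval_reduced_word
    (n : ℕ) (hn : 2 ≤ n) (K : Finset ℕ) (hK : K ⊆ Finset.Icc 1 (n - 1))
    (w0K : Equiv.Perm ℕ) (hw0K : ∀ x, w0K x = w0KFun K x) :
    ∃ (m : ℕ) (a b : Fin m → ℕ),
      IsReducedWord n
        ((List.ofFn (fun i => intervalWord (a i) (b i))).reverse.flatten)
        (w0 n * w0K) ∧
      (∀ i : Fin m, 0 < (i : ℕ) →
        (b i ∉ (Finset.univ.filter (fun j : Fin m => j < i)).biUnion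
            (fun j => (intervalWord (a j) (b j)).toFinset) ∧
         ∀ x ∈ intervalWord (a i) (b i), x ≠ b i →
           x ∈ (Finset.univ.filter (fun j : Fin m => j < i)).biUnion
             (fun j => (intervalWord (a j) (b j)).toFinset))) ∧
      (∀ i : Fin m, ∃ c d : ℕ,
        (Finset.univ.filter (fun j : Fin m => j ≤ i)).biUnion
            (fun j => (intervalWord (a j) (b j)).toFinset) = Finset.Icc c d ∧
        Finset.Icc c d ⊆ Finset.Icc 1 (n - 1)) := by
  classical
  have h0 : 0 ∉ K := by
    intro h; have := Finset.mem_Icc.1 (hK h); omega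
  have hBn : ∀ y ∈ K, y ≤ n - 1 := fun y hy => (Finset.mem_Icc.1 (hK hy)).2
  have hB := sup_bound K
  have hp1 : 1 ≤ blockEnd K 1 := be_ge K hB 1
  have hpn : blockEnd K 1 ≤ n := by
    have := be_le K hBn (x := 1) (by omega); omega
  have hc2' : ∀ t : ℕ, 2 ≤ blockStart K (blockEnd K 1 + t + 1) :=
    fun t => c_ge_two K h0 (by omega)
  have hcle' : ∀ t : ℕ, blockStart K (blockEnd K 1 + t + 1) ≤ blockEnd K 1 + t + 1 :=
    fun t => bs_le K _
  have hab' : ∀ t : ℕ, blockEnd K 1 + t + 2 - blockStart K (blockEnd K 1 + t + 1)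
      ≤ blockEnd K 1 + t := by
    intro t; have := hc2' t; have := hcle' t; omega
  have hab : ∀ i : Fin (n - blockEnd K 1),
      blockEnd K 1 + (i : ℕ) + 2 - blockStart K (blockEnd K 1 + (i : ℕ) + 1)
        ≤ blockEnd K 1 + (i : ℕ) := fun i => hab' (i : ℕ)
  have hbsp : blockStart K (blockEnd K 1 + 1) = blockEnd K 1 + 1 := by
    have h1 := bs_le K (blockEnd K 1 + 1)
    rcases Nat.eq_or_lt_of_le h1 with h | h
    · exact h
    · exact absurd (bs_edges K (x := blockEnd K 1 + 1) (by omega) (by omega))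
        (be_not_mem K hB 1)
  have hmemT : ∀ x t : ℕ,
      blockEnd K 1 + t + 2 - blockStart K (blockEnd K 1 + t + 1) ≤ x →
      x ≤ blockEnd K 1 + t →
      x ∈ (intervalWord (blockEnd K 1 + t + 2 - blockStart K (blockEnd K 1 + t + 1))
        (blockEnd K 1 + t)).toFinset := by
    intro x t h1 h2
    rw [toFinset_intervalWord (hab' t), Finset.mem_Icc]
    exact ⟨h1, h2⟩
  set W : List ℕ := (List.ofFn (fun i : Fin (n - blockEnd K 1) =>
      intervalWord (blockEnd K 1 + (i : ℕ) + 2 - blockStart K (blockEnd K 1 + (i : ℕ) + 1))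
        (blockEnd K 1 + (i : ℕ)))).reverse.flatten with hWdef
  -- the product is correct
  have hchain := uPerm_chain K h0 (n - blockEnd K 1)
  rw [show blockEnd K 1 + (n - blockEnd K 1) = n by omega] at hchain
  have hKfil : Kfil K n = K := by
    ext y
    simp only [Kfil, Finset.mem_filter]
    exact ⟨fun h => h.1, fun hy => ⟨hy, by have := hBn y hy; omega⟩⟩
  have huK : uPerm K h0 n = w0 n * w0K := by
    rw [uPerm]
    congr 1
    ext x
    rw [w0KPerm_apply, hw0K x, hKfil]
  have hWprod : wordProd W = w0 n * w0K := by
    rw [← hWdef] at hchain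
    rw [← hchain, huK]
  -- letters lie in [1, n-1]
  have hWword : IsWord n W := by
    intro x hx
    rw [hWdef, List.mem_flatten] at hx
    obtain ⟨l, hl, hxl⟩ := hx
    rw [List.mem_reverse] at hl
    obtain ⟨i, hfi⟩ := List.mem_ofFn.1 hl
    rw [← hfi, mem_intervalWord (hab i)] at hxl
    have h1 := hc2' (i : ℕ)
    have h2 := hcle' (i : ℕ)
    have h3 := i.2
    omega
  -- length computation
  have hWlen : W.length =
      ∑ i : Fin (n - blockEnd K 1), (blockStart K (blockEnd K 1 + (i : ℕ) + 1) - 1) := by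
    rw [hWdef, List.length_flatten, List.map_reverse, List.sum_reverse, List.map_ofFn,
      List.sum_ofFn]
    apply Finset.sum_congr rfl
    intro i _
    simp only [Function.comp]
    rw [length_intervalWord (hab i)]
    have := hc2' (i : ℕ); have := hcle' (i : ℕ); omega
  have hsum : W.length = ∑ y ∈ Finset.Icc (blockEnd K 1 + 1) n, (blockStart K y - 1) := by
    rw [hWlen, ← Finset.Ico_add_one_right_eq_Icc, Finset.sum_Ico_eq_sum_range,
      show n + 1 - (blockEnd K 1 + 1) = n - blockEnd K 1 by omega,
      ← Fin.sum_univ_eq_sum_range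
        (fun t => blockStart K (blockEnd K 1 + 1 + t) - 1) (n - blockEnd K 1)]
    apply Finset.sum_congr rfl
    intro i _
    rw [show blockEnd K 1 + (i : ℕ) + 1 = blockEnd K 1 + 1 + (i : ℕ) by omega]
  set S0 : Finset (ℕ × ℕ) := (Finset.Icc (blockEnd K 1 + 1) n).biUnion
      (fun y => (Finset.Ico 1 (blockStart K y)).image (fun x => (x, y))) with hS0def
  have hS0card : S0.card = W.length := by
    rw [hS0def, Finset.card_biUnion]
    · rw [hsum]
      apply Finset.sum_congr rfl
      intro y _
      rw [Finset.card_image_of_injective _ (fun a b h => (Prod.ext_iff.mp h).1),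
        Nat.card_Ico]
    · intro y1 _ y2 _ hne
      simp only [Function.onFun]
      rw [Finset.disjoint_left]
      rintro p hp1 hp2
      rw [Finset.mem_image] at hp1 hp2
      obtain ⟨x1, _, rfl⟩ := hp1
      obtain ⟨x2, _, heq⟩ := hp2
      exact hne ((Prod.ext_iff.mp heq).2.symm)
  have hS0sub : S0 ⊆ InvSet n (w0 n * w0K) := by
    intro p hp
    rw [hS0def, Finset.mem_biUnion] at hp
    obtain ⟨y, hy, hp⟩ := hp
    rw [Finset.mem_image] at hp
    obtain ⟨x, hx, rfl⟩ := hp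
    rw [Finset.mem_Icc] at hy
    rw [Finset.mem_Ico] at hx
    have hbsy := bs_le K y
    have hbey := be_ge K hB y
    have hbsx := bs_le K x
    have hbex := be_ge K hB x
    have hflip : blockEnd K x < blockStart K y := by
      by_contra hcon
      push_neg at hcon
      have e1 : blockStart K (blockStart K y) = blockStart K x :=
        bs_between K hB (by omega) (by omega)
      have e2 : blockStart K (blockStart K y) = blockStart K y :=
        bs_between K hB (le_refl _) (by omega)
      omega
    have hben : blockEnd K x ≤ n := by
      have := be_le K hBn (x := x) (by omega); omega
    have hbeyn : blockEnd K y ≤ n := by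
      have := be_le K hBn (x := y) (by omega); omega
    rw [InvSet, Finset.mem_filter]
    refine ⟨?_, by omega, ?_⟩
    · rw [Finset.mem_product]
      simp only [Finset.mem_Icc]
      omega
    · show (w0 n * w0K) y < (w0 n * w0K) x
      rw [← huK, uPerm_apply_le K h0 (by omega) (by omega),
        uPerm_apply_le K h0 (by omega) (by omega)]
      omega
  have hlenEq : W.length = lengthPermN n (w0 n * w0K) := by
    have hub : lengthPermN n (w0 n * w0K) ≤ W.length :=
      Nat.sInf_le ⟨W, hWword, rfl, hWprod⟩
    have hne : {m | ∃ l : List ℕ, IsWord n l ∧ l.length = m ∧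
        wordProd l = w0 n * w0K}.Nonempty := ⟨W.length, W, hWword, rfl, hWprod⟩
    obtain ⟨l, hl1, hl2, hl3⟩ := Nat.sInf_mem hne
    have h1 : S0.card ≤ (InvSet n (w0 n * w0K)).card := Finset.card_le_card hS0sub
    have h2 := card_InvSet_le n l
    rw [hl3] at h2
    have h3 : W.length ≤ lengthPermN n (w0 n * w0K) :=
      calc W.length = S0.card := hS0card.symm
        _ ≤ (InvSet n (w0 n * w0K)).card := h1
        _ ≤ l.length := h2
        _ = lengthPermN n (w0 n * w0K) := hl2
    omega
  refine ⟨n - blockEnd K 1,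
    fun i => blockEnd K 1 + (i : ℕ) + 2 - blockStart K (blockEnd K 1 + (i : ℕ) + 1),
    fun i => blockEnd K 1 + (i : ℕ), ⟨hWword, hWprod, hlenEq⟩, ?_, ?_⟩
  · -- freshness conditions
    intro i hi
    constructor
    · intro hmem
      rw [Finset.mem_biUnion] at hmem
      obtain ⟨j, hj, hmem⟩ := hmem
      rw [Finset.mem_filter] at hj
      rw [toFinset_intervalWord (hab j)] at hmem
      have h2 : blockEnd K 1 + (i : ℕ) ≤ blockEnd K 1 + (j : ℕ) :=
        (Finset.mem_Icc.1 hmem).2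
      have hji : (j : ℕ) < (i : ℕ) := hj.2
      omega
    · intro x hxmem hxne
      have hxm : blockEnd K 1 + (i : ℕ) + 2 - blockStart K (blockEnd K 1 + (i : ℕ) + 1) ≤ x
          ∧ x ≤ blockEnd K 1 + (i : ℕ) := (mem_intervalWord (hab i)).1 hxmem
      have hxne' : x ≠ blockEnd K 1 + (i : ℕ) := hxne
      rw [Finset.mem_biUnion]
      rcases le_or_gt x (blockEnd K 1) with hle | hgt
      · refine ⟨⟨0, by omega⟩, ?_, ?_⟩
        · rw [Finset.mem_filter]
          refine ⟨Finset.mem_univ _, ?_⟩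
          rw [Fin.lt_def]
          exact hi
        · refine hmemT x 0 ?_ (by omega)
          have h := hbsp
          rw [show blockEnd K 1 + 1 = blockEnd K 1 + 0 + 1 by omega] at h
          have := hc2' 0
          have := hcle' (i : ℕ)
          omega
      · refine ⟨⟨x - blockEnd K 1, by omega⟩, ?_, ?_⟩
        · rw [Finset.mem_filter]
          refine ⟨Finset.mem_univ _, ?_⟩
          rw [Fin.lt_def]
          show x - blockEnd K 1 < (i : ℕ)
          omega
        · refine hmemT x (x - blockEnd K 1) ?_ (by omega)
          have := hab' (x - blockEnd K 1)
          omega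
  · -- unions are intervals
    intro i
    refine ⟨1, blockEnd K 1 + (i : ℕ), ?_, ?_⟩
    · ext x
      simp only [Finset.mem_biUnion, Finset.mem_filter, Finset.mem_univ, true_and,
        Finset.mem_Icc]
      constructor
      · rintro ⟨j, hji, hmem⟩
        rw [toFinset_intervalWord (hab j)] at hmem
        have h1 : blockEnd K 1 + (j : ℕ) + 2 - blockStart K (blockEnd K 1 + (j : ℕ) + 1)
            ≤ x := (Finset.mem_Icc.1 hmem).1
        have h2 : x ≤ blockEnd K 1 + (j : ℕ) := (Finset.mem_Icc.1 hmem).2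
        have h3 := hc2' (j : ℕ)
        have h4 := hcle' (j : ℕ)
        have hji' : (j : ℕ) ≤ (i : ℕ) := hji
        omega
      · rintro ⟨hx1, hx2⟩
        rcases le_or_gt x (blockEnd K 1) with hle | hgt
        · refine ⟨⟨0, by omega⟩, ?_, ?_⟩
          · rw [Fin.le_def]
            exact Nat.zero_le _
          · refine hmemT x 0 ?_ (by omega)
            have h := hbsp
            rw [show blockEnd K 1 + 1 = blockEnd K 1 + 0 + 1 by omega] at h
            omega
        · refine ⟨⟨x - blockEnd K 1, by omega⟩, ?_, ?_⟩
          · rw [Fin.le_def]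
            show x - blockEnd K 1 ≤ (i : ℕ)
            omega
          · refine hmemT x (x - blockEnd K 1) ?_ (by omega)
            have := hab' (x - blockEnd K 1)
            omega
    · intro x hx
      rw [Finset.mem_Icc] at hx ⊢
      have := i.2
      omega
end

section
/- Let n ≥ 2, let J = [r, s] ⊆ {1,…,n−1} be an interval, and let k ∈ J. Then the cardinality of the collection S_{J,k,□} equals (2ns − r(r+1) − s(s−1) + 2)/2. In particular this number does not depend on k, and for J = {k} one gets |S_{k,□}| = k(n−k) + 1. -/
/-- An interval subset of `[n] = {1,…,n}`, i.e. one of the form `{a, a+1, …, b}`. -/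
def IsIntervalSet (n : ℕ) (I : Finset ℕ) : Prop :=
  I ⊆ Finset.Icc 1 n ∧ ∃ a b : ℕ, I = Finset.Icc a b

/-- A cointerval subset of `[n]`: its complement in `[n]` is an interval. -/
def IsCointervalSet (n : ℕ) (I : Finset ℕ) : Prop :=
  I ⊆ Finset.Icc 1 n ∧ ∃ a b : ℕ, Finset.Icc 1 n \ I = Finset.Icc a b

/-- The rectangle collection `S_{k,□}`: all interval `k`-subsets of `[n]` together with
all `k`-subsets of `[n]` that contain `1` and are a disjoint union of two intervals. -/
def Srect (n k : ℕ) : Set (Finset ℕ) :=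
  {I | I ⊆ Finset.Icc 1 n ∧ I.card = k ∧
    ((∃ a b : ℕ, I = Finset.Icc a b) ∨
     (1 ∈ I ∧ ∃ A B : Finset ℕ, (∃ a b : ℕ, A = Finset.Icc a b) ∧
        (∃ c d : ℕ, B = Finset.Icc c d) ∧ Disjoint A B ∧ I = A ∪ B))}

/-- The extended rectangle collection `S_{J,k,□}`: `S_{k,□}` together with all interval
`t`-subsets for `t ∈ J`, `t > k`, and all cointerval `t`-subsets for `t ∈ J`, `t < k`. -/
def SJrect (n : ℕ) (J : Finset ℕ) (k : ℕ) : Set (Finset ℕ) :=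
  Srect n k ∪ {I | IsIntervalSet n I ∧ I.card ∈ J ∧ k < I.card}
    ∪ {I | IsCointervalSet n I ∧ I.card ∈ J ∧ I.card < k}

/-!
The collection `S_{[r,s],k,□}` splits by cardinality. Its `k`-sets are `{1,…,k}` together with
the sets `{1,…,i} ∪ {i+m+2,…,m+k+1}` for `i < k`, `m < n - k`, so there are `k(n-k) + 1` of
them. For `t > k` there are `n + 1 - t` interval `t`-sets, and for `t < k` there are `t + 1`
cointerval `t`-sets (complements of interval `(n-t)`-sets). Summing these arithmetic
progressions over `(k, s]` and `[r, k)` gives the formula; the dependence on `k` cancels.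
-/

open Finset

section Intervals

variable {n t : ℕ} {I : Finset ℕ}

def intervalsOfCard (n t : ℕ) : Finset (Finset ℕ) :=
  (Icc 1 (n + 1 - t)).image fun a => Icc a (a + t - 1)

def cointervalsOfCard (n t : ℕ) : Finset (Finset ℕ) :=
  (intervalsOfCard n (n - t)).image (Icc 1 n \ ·)

lemma mem_intervalsOfCard (ht : 1 ≤ t) :
    I ∈ intervalsOfCard n t ↔ IsIntervalSet n I ∧ I.card = t := by
  simp only [intervalsOfCard, mem_image, mem_Icc]
  constructor
  · rintro ⟨a, ha, rfl⟩
    refine ⟨⟨fun x hx => ?_, a, a + t - 1, rfl⟩, ?_⟩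
    · simp only [mem_Icc] at hx ⊢; omega
    · simp only [Nat.card_Icc]; omega
  · rintro ⟨⟨hsub, a, b, rfl⟩, hcard⟩
    rw [Nat.card_Icc] at hcard
    have hab : a ≤ b := by omega
    rw [Icc_subset_Icc_iff hab] at hsub
    exact ⟨a, by omega, by congr 1; omega⟩

lemma card_intervalsOfCard (ht : 1 ≤ t) : (intervalsOfCard n t).card = n + 1 - t := by
  rw [intervalsOfCard, card_image_of_injOn, Nat.card_Icc, Nat.add_sub_cancel]
  intro a _ b _ hab
  have ha := (Finset.ext_iff.mp hab a).mp
  have hb := (Finset.ext_iff.mp hab b).mpr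
  simp only [mem_Icc] at ha hb
  omega

lemma mem_cointervalsOfCard (ht : t < n) :
    I ∈ cointervalsOfCard n t ↔ IsCointervalSet n I ∧ I.card = t := by
  simp only [cointervalsOfCard, mem_image, mem_intervalsOfCard (Nat.sub_pos_of_lt ht)]
  constructor
  · rintro ⟨J, ⟨⟨hJ, a, b, hab⟩, hcard⟩, rfl⟩
    refine ⟨⟨sdiff_subset, a, b, by rw [Finset.sdiff_sdiff_eq_self hJ, hab]⟩, ?_⟩
    rw [card_sdiff_of_subset hJ, hcard, Nat.card_Icc]
    omega
  · rintro ⟨⟨hI, a, b, hab⟩, hcard⟩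
    refine ⟨Icc 1 n \ I, ⟨⟨sdiff_subset, a, b, hab⟩, ?_⟩, Finset.sdiff_sdiff_eq_self hI⟩
    rw [card_sdiff_of_subset hI, hcard, Nat.card_Icc, Nat.add_sub_cancel]

lemma card_cointervalsOfCard (ht : t < n) : (cointervalsOfCard n t).card = t + 1 := by
  rw [cointervalsOfCard, card_image_of_injOn, card_intervalsOfCard (Nat.sub_pos_of_lt ht)]
  · omega
  intro J hJ K hK hJK
  have hJn := ((mem_intervalsOfCard (Nat.sub_pos_of_lt ht)).mp hJ).1.1
  have hKn := ((mem_intervalsOfCard (Nat.sub_pos_of_lt ht)).mp hK).1.1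
  simpa only [Finset.sdiff_sdiff_eq_self hJn, Finset.sdiff_sdiff_eq_self hKn] using
    congrArg (Icc 1 n \ ·) hJK

end Intervals

lemma card_biUnion_of_forall_card_eq {α : Type*} [DecidableEq α] {T : Finset ℕ}
    {𝒜 : ℕ → Finset (Finset α)} (h : ∀ t ∈ T, ∀ I ∈ 𝒜 t, I.card = t) :
    (T.biUnion 𝒜).card = ∑ t ∈ T, (𝒜 t).card := by
  refine card_biUnion fun t ht u hu htu => disjoint_left.mpr fun I hIt hIu => htu ?_
  rw [← h t ht I hIt, h u hu I hIu]

lemma two_mul_sum_Ico_id {a b : ℕ} (hab : a ≤ b) :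
    2 * ∑ t ∈ Ico a b, (t : ℤ) = b * (b - 1) - a * (a - 1) := by
  induction b, hab using Nat.le_induction with
  | base => simp
  | succ b hab ih => rw [sum_Ico_succ_top hab, mul_add, ih]; push_cast; ring

section Rectangles

variable {n k : ℕ}

/-- An initial block of length `i` and, after a gap of length `m + 1`, a block of length `k - i`.
For `i = 0` these are the intervals not containing `1`. -/
def twoBlock (k i m : ℕ) : Finset ℕ :=
  Icc 1 i ∪ Icc (i + m + 2) (m + k + 1)

lemma mem_twoBlock {k i m x : ℕ} :
    x ∈ twoBlock k i m ↔ (1 ≤ x ∧ x ≤ i) ∨ (i + m + 2 ≤ x ∧ x ≤ m + k + 1) := by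
  simp only [twoBlock, mem_union, mem_Icc]

lemma disjoint_Icc_Icc_of_lt {α : Type*} [Preorder α] [LocallyFiniteOrder α] {a b c d : α}
    (h : b < c) : Disjoint (Icc a b) (Icc c d) :=
  disjoint_left.mpr fun _ hx hx' => ((mem_Icc.mp hx).2.trans_lt h).not_ge (mem_Icc.mp hx').1

lemma card_twoBlock {i m : ℕ} (hi : i < k) : (twoBlock k i m).card = k := by
  rw [twoBlock, card_union_of_disjoint (disjoint_Icc_Icc_of_lt (by omega)), Nat.card_Icc,
    Nat.card_Icc]
  omega

/-- The collection `S_{k,□}`, parametrised so that its cardinality can be read off. -/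
def rectangles (n k : ℕ) : Finset (Finset ℕ) :=
  insert (Icc 1 k) ((range k ×ˢ range (n - k)).image fun p => twoBlock k p.1 p.2)

lemma card_rectangles : (rectangles n k).card = k * (n - k) + 1 := by
  rw [rectangles, card_insert_of_notMem, card_image_of_injOn, card_product, card_range,
    card_range]
  · rintro ⟨i, m⟩ him ⟨i', m'⟩ him' h
    simp only [coe_product, Set.mem_prod, mem_coe, mem_range] at him him'
    have H := Finset.ext_iff.mp h
    have := H (i + 1); have := H (i' + 1); have := H (i + m + 2); have := H (i' + m' + 2)
    simp only [mem_twoBlock] at *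
    ext <;> omega
  · simp only [mem_image, mem_product, mem_range, not_exists, not_and, Prod.forall]
    intro i m hi h
    have := (Finset.ext_iff.mp h (i + 1)).mpr
    simp only [mem_twoBlock, mem_Icc] at this
    omega

lemma union_Icc_mem_rectangles {i c d : ℕ} (hsub : Icc 1 i ∪ Icc c d ⊆ Icc 1 n)
    (hdisj : Disjoint (Icc 1 i) (Icc c d)) (hcard : (Icc 1 i ∪ Icc c d).card = k) :
    Icc 1 i ∪ Icc c d ∈ rectangles n k := by
  have hmem : ∀ x, (1 ≤ x ∧ x ≤ i) ∨ (c ≤ x ∧ x ≤ d) → 1 ≤ x ∧ x ≤ n := fun x hx => by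
    simpa only [mem_Icc] using hsub (by simpa only [mem_union, mem_Icc] using hx)
  have hsep : ∀ x, 1 ≤ x ∧ x ≤ i → ¬(c ≤ x ∧ x ≤ d) := fun x hx hx' =>
    disjoint_left.mp hdisj (mem_Icc.mpr hx) (mem_Icc.mpr hx')
  rw [card_union_of_disjoint hdisj, Nat.card_Icc, Nat.card_Icc] at hcard
  have := hmem i; have := hmem c; have := hmem d; have := hsep c
  rw [rectangles, mem_insert, mem_image]
  by_cases hgap : c ≤ d ∧ i + 2 ≤ c
  · refine .inr ⟨(i, c - i - 2), by simp only [mem_product, mem_range]; omega, ?_⟩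
    ext x
    simp only [mem_twoBlock, mem_union, mem_Icc]
    omega
  · refine .inl (Finset.ext fun x => ?_)
    simp only [mem_union, mem_Icc]
    omega

lemma twoBlock_mem_Srect {i m : ℕ} (hi : i < k) (hm : m < n - k) :
    twoBlock k i m ∈ Srect n k := by
  refine ⟨fun x hx => ?_, card_twoBlock hi, ?_⟩
  · rw [mem_twoBlock] at hx
    rw [mem_Icc]
    omega
  rcases Nat.eq_zero_or_pos i with rfl | hi0
  · refine .inl ⟨m + 2, m + k + 1, Finset.ext fun x => ?_⟩
    rw [mem_twoBlock, mem_Icc]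
    omega
  · exact .inr ⟨mem_twoBlock.mpr (by omega), _, _, ⟨_, _, rfl⟩, ⟨_, _, rfl⟩,
      disjoint_Icc_Icc_of_lt (by omega), rfl⟩

lemma Srect_eq_rectangles (hkn : k ≤ n) : Srect n k = rectangles n k := by
  ext I
  constructor
  · rintro ⟨hsub, hcard, ⟨a, b, rfl⟩ | ⟨h1, _, _, ⟨a, b, rfl⟩, ⟨c, d, rfl⟩, hdisj, rfl⟩⟩
    · rw [← empty_union (Icc a b), ← Icc_eq_empty_of_lt zero_lt_one] at hsub hcard ⊢
      exact union_Icc_mem_rectangles hsub (by simp) hcard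
    wlog h1a : 1 ∈ Icc a b generalizing a b c d
    · rw [union_comm] at hsub hcard h1 ⊢
      exact this c d a b hdisj.symm hsub hcard h1 ((mem_union.mp h1).resolve_right h1a)
    obtain rfl : a = 1 := by
      have ha := mem_Icc.mp h1a
      have := hsub (mem_union_left _ (mem_Icc.mpr ⟨le_rfl, ha.1.trans ha.2⟩))
      rw [mem_Icc] at this
      omega
    exact union_Icc_mem_rectangles hsub hdisj hcard
  · rw [mem_coe, rectangles, mem_insert, mem_image]
    rintro (rfl | ⟨⟨i, m⟩, him, rfl⟩)
    · exact ⟨Icc_subset_Icc_right hkn, by simp, .inl ⟨1, k, rfl⟩⟩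
    · simp only [mem_product, mem_range] at him
      exact twoBlock_mem_Srect him.1 him.2

lemma card_of_mem_rectangles {I : Finset ℕ} (hI : I ∈ rectangles n k) : I.card = k := by
  simp only [rectangles, mem_insert, mem_image, mem_product, mem_range] at hI
  obtain rfl | ⟨⟨i, m⟩, ⟨hi, -⟩, rfl⟩ := hI
  · simp
  · exact card_twoBlock hi

end Rectangles

/-- The collection `S_{[r,s],k,□}`, sorted by cardinality. -/
def extendedRectangles (n r s k : ℕ) : Finset (Finset ℕ) :=
  rectangles n k ∪ (Ico (k + 1) (s + 1)).biUnion (intervalsOfCard n) ∪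
    (Ico r k).biUnion (cointervalsOfCard n)

lemma SJrect_eq_extendedRectangles {n r s k : ℕ} (hrk : r ≤ k) (hks : k ≤ s) (hkn : k ≤ n) :
    SJrect n (Icc r s) k = extendedRectangles n r s k := by
  ext I
  simp only [SJrect, extendedRectangles, Srect_eq_rectangles hkn, coe_union, coe_biUnion,
    Set.mem_union, Set.mem_iUnion, Set.mem_ofPred_eq, mem_coe, mem_Ico, mem_Icc, exists_prop]
  refine or_congr (or_congr Iff.rfl ?_) ?_
  · constructor
    · rintro ⟨hI, hcard, hk⟩
      exact ⟨I.card, by omega, (mem_intervalsOfCard (by omega)).mpr ⟨hI, rfl⟩⟩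
    · rintro ⟨t, ht, hI⟩
      obtain ⟨hint, rfl⟩ := (mem_intervalsOfCard (by omega)).mp hI
      exact ⟨hint, by omega, by omega⟩
  · constructor
    · rintro ⟨hI, hcard, hk⟩
      exact ⟨I.card, by omega, (mem_cointervalsOfCard (by omega)).mpr ⟨hI, rfl⟩⟩
    · rintro ⟨t, ht, hI⟩
      obtain ⟨hcoint, rfl⟩ := (mem_cointervalsOfCard (by omega)).mp hI
      exact ⟨hcoint, by omega, by omega⟩

lemma card_extendedRectangles {n r s k : ℕ} (hkn : k ≤ n) :
    (extendedRectangles n r s k).card = k * (n - k) + 1 +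
      ∑ t ∈ Ico (k + 1) (s + 1), (n + 1 - t) + ∑ t ∈ Ico r k, (t + 1) := by
  have hpos : ∀ t ∈ Ico (k + 1) (s + 1), 1 ≤ t := fun t ht => by rw [mem_Ico] at ht; omega
  have hlt : ∀ t ∈ Ico r k, t < n := fun t ht => by rw [mem_Ico] at ht; omega
  have hint : ∀ t ∈ Ico (k + 1) (s + 1), ∀ I ∈ intervalsOfCard n t, I.card = t :=
    fun t ht I hI => ((mem_intervalsOfCard (hpos t ht)).mp hI).2
  have hcoint : ∀ t ∈ Ico r k, ∀ I ∈ cointervalsOfCard n t, I.card = t :=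
    fun t ht I hI => ((mem_cointervalsOfCard (hlt t ht)).mp hI).2
  have hdisj₁ :
      Disjoint (rectangles n k) ((Ico (k + 1) (s + 1)).biUnion (intervalsOfCard n)) :=
    disjoint_left.mpr fun I hI hI' => by
      obtain ⟨t, ht, hIt⟩ := mem_biUnion.mp hI'
      have := card_of_mem_rectangles hI; have := hint t ht I hIt; rw [mem_Ico] at ht
      omega
  have hdisj₂ : Disjoint (rectangles n k ∪ (Ico (k + 1) (s + 1)).biUnion (intervalsOfCard n))
      ((Ico r k).biUnion (cointervalsOfCard n)) :=
    disjoint_left.mpr fun I hI hI' => by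
      obtain ⟨t, ht, hIt⟩ := mem_biUnion.mp hI'
      have := hcoint t ht I hIt; rw [mem_Ico] at ht
      rcases mem_union.mp hI with hI | hI
      · have := card_of_mem_rectangles hI
        omega
      · obtain ⟨u, hu, hIu⟩ := mem_biUnion.mp hI
        have := hint u hu I hIu; rw [mem_Ico] at hu
        omega
  rw [extendedRectangles, card_union_of_disjoint hdisj₂, card_union_of_disjoint hdisj₁,
    card_rectangles, card_biUnion_of_forall_card_eq hint,
    card_biUnion_of_forall_card_eq hcoint,
    sum_congr rfl fun t ht => card_intervalsOfCard (hpos t ht),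
    sum_congr rfl fun t ht => card_cointervalsOfCard (hlt t ht)]

lemma two_mul_card_extendedRectangles {n r s k : ℕ} (hrk : r ≤ k) (hks : k ≤ s)
    (hsn : s ≤ n) :
    2 * ((extendedRectangles n r s k).card : ℤ) =
      2 * n * s - r * (r + 1) - s * (s - 1) + 2 := by
  have hcast : ((∑ t ∈ Ico (k + 1) (s + 1), (n + 1 - t) : ℕ) : ℤ) =
      ∑ t ∈ Ico (k + 1) (s + 1), ((n + 1 : ℤ) - t) := by
    push_cast
    exact sum_congr rfl fun t ht => by rw [mem_Ico] at ht; omega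
  have hgaussUp := two_mul_sum_Ico_id (show k + 1 ≤ s + 1 by omega)
  have hgaussLow := two_mul_sum_Ico_id hrk
  rw [card_extendedRectangles (hks.trans hsn), Nat.cast_add, Nat.cast_add, hcast]
  simp only [sum_sub_distrib, sum_add_distrib, sum_const, Nat.card_Ico, nsmul_eq_mul]
  push_cast [Nat.cast_sub hks, Nat.cast_sub hrk, Nat.cast_sub (hks.trans hsn)]
    at hgaussUp hgaussLow ⊢
  linear_combination hgaussLow - hgaussUp

theorem card_extended_rectangle_collection_general
    (n r s k : ℕ) (hs : s ≤ n - 1)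
    (hrk : r ≤ k) (hks : k ≤ s) :
    2 * ((SJrect n (Finset.Icc r s) k).ncard : ℤ) =
      2 * (n : ℤ) * (s : ℤ) - (r : ℤ) * ((r : ℤ) + 1) - (s : ℤ) * ((s : ℤ) - 1) + 2 ∧
    (Srect n k).ncard = k * (n - k) + 1 := by
  have hkn : k ≤ n := by omega
  constructor
  · rw [SJrect_eq_extendedRectangles hrk hks hkn, Set.ncard_coe_finset]
    exact two_mul_card_extendedRectangles hrk hks (by omega)
  · rw [Srect_eq_rectangles hkn, Set.ncard_coe_finset, card_rectangles]

/-- **Cardinality of the extended rectangle collection.**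
For an interval `J = [r,s] ⊆ {1,…,n−1}` and `k ∈ J`,
`|S_{J,k,□}| = (2ns − r(r+1) − s(s−1) + 2)/2`; in particular this does not depend on
`k`, and `|S_{k,□}| = k(n−k) + 1`. -/
theorem card_extended_rectangle_collection
    (n r s k : ℕ) (hn : 2 ≤ n)
    (hr : 1 ≤ r) (hrs : r ≤ s) (hs : s ≤ n - 1)
    (hrk : r ≤ k) (hks : k ≤ s) :
    2 * ((SJrect n (Finset.Icc r s) k).ncard : ℤ) =
      2 * (n : ℤ) * (s : ℤ) - (r : ℤ) * ((r : ℤ) + 1) - (s : ℤ) * ((s : ℤ) - 1) + 2 ∧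
    (Srect n k).ncard = k * (n - k) + 1 :=
  card_extended_rectangle_collection_general n r s k hs hrk hks
end
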